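/- If a join-semilattice S with least element 0 admits a basis, then the basis is unique and equals the set of nonzero coprime elements of S; consequently if S is finite with r nonzero coprime elements, S has exactly 2^r elements. -/

import Mathlib

/-!
Unique representation forces a basis element `b ≤ sup F` (with `F ⊆ B`) to lie in `F`, since
`insert b F` has the same join as `F`; expanding an arbitrary finite `F` into basis elements then
shows every basis element is coprime. Conversely a nonzero coprime `p` lies below some element of
its own representation, which is also below `p`, so `p` is a basis element. Finally `F ↦ sup F`
is a bijection from finite sets of basis elements onto `S`.
-/

def IsSemilatticeBasis {S : Type*} [SemilatticeSup S] [OrderBot S] (B : Set S) : Prop :=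
  ∀ x : S, ∃! F : Finset S, ↑F ⊆ B ∧ x = F.sup id

def NonzeroCoprimes (S : Type*) [SemilatticeSup S] [OrderBot S] : Set S :=
  {p | p ≠ ⊥ ∧ ∀ (F : Finset S) (hF : F.Nonempty), p ≤ F.sup' hF id → ∃ f ∈ F, p ≤ f}

namespace IsSemilatticeBasis

variable {S : Type*} [SemilatticeSup S] [OrderBot S] {B : Set S}

theorem eq_of_sup_eq (hB : IsSemilatticeBasis B) {F G : Finset S} (hF : ↑F ⊆ B) (hG : ↑G ⊆ B)
    (h : F.sup id = G.sup id) : F = G :=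
  (hB (F.sup id)).unique ⟨hF, rfl⟩ ⟨hG, h⟩

theorem bot_notMem (hB : IsSemilatticeBasis B) : ⊥ ∉ B := fun hbot => by
  simpa using hB.eq_of_sup_eq (F := {⊥}) (G := ∅) (by simpa using hbot) (by simp) (by simp)

theorem mem_of_le_sup (hB : IsSemilatticeBasis B) {b : S} {F : Finset S} (hb : b ∈ B)
    (hF : ↑F ⊆ B) (hle : b ≤ F.sup id) : b ∈ F := by
  classical
  have hins : insert b F = F :=
    hB.eq_of_sup_eq (by simpa [Set.insert_subset_iff] using ⟨hb, hF⟩) hF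
      (by rw [Finset.sup_insert]; exact sup_eq_right.mpr hle)
  exact hins ▸ Finset.mem_insert_self b F

theorem exists_le_of_le_sup (hB : IsSemilatticeBasis B) {b : S} (hb : b ∈ B) {F : Finset S}
    (hle : b ≤ F.sup id) : ∃ f ∈ F, b ≤ f := by
  classical
  choose G hGB hGsup using fun f => (hB f).exists
  have hbG : b ∈ F.biUnion G := by
    refine hB.mem_of_le_sup hb (by simpa using fun f _ => hGB f) ?_
    rwa [Finset.sup_biUnion, Finset.sup_congr rfl fun f _ => (hGsup f).symm]
  obtain ⟨f, hf, hbf⟩ := Finset.mem_biUnion.mp hbG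
  exact ⟨f, hf, (hGsup f).symm ▸ Finset.le_sup (f := id) hbf⟩

theorem subset_nonzeroCoprimes (hB : IsSemilatticeBasis B) : B ⊆ NonzeroCoprimes S :=
  fun _ hb => ⟨fun h => hB.bot_notMem (h ▸ hb), fun _ hF hle =>
    hB.exists_le_of_le_sup hb (Finset.sup'_eq_sup hF id ▸ hle)⟩

theorem nonzeroCoprimes_subset (hB : IsSemilatticeBasis B) : NonzeroCoprimes S ⊆ B := by
  rintro p ⟨hp0, hp⟩
  obtain ⟨F, hFB, hFsup⟩ := (hB p).exists
  have hFne : F.Nonempty := Finset.nonempty_iff_ne_empty.mpr fun h => hp0 (by simp [hFsup, h])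
  obtain ⟨f, hf, hpf⟩ := hp F hFne (by rw [Finset.sup'_eq_sup]; exact hFsup.le)
  have hfp : f ≤ p := hFsup ▸ Finset.le_sup (f := id) hf
  exact le_antisymm hpf hfp ▸ hFB hf

theorem eq_nonzeroCoprimes (hB : IsSemilatticeBasis B) : B = NonzeroCoprimes S :=
  hB.subset_nonzeroCoprimes.antisymm hB.nonzeroCoprimes_subset

theorem bijective_finset_sup (hB : IsSemilatticeBasis B) :
    Function.Bijective fun F : Finset B => F.sup Subtype.val := by
  classical
  have hsup (F : Finset B) : F.sup Subtype.val = (F.map (.subtype _)).sup id := by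
    rw [Finset.sup_map]; rfl
  have hsub (F : Finset B) : ↑(F.map (.subtype _)) ⊆ B := by simp
  refine ⟨fun F G h => Finset.map_injective (.subtype (· ∈ B)) ?_, fun x => ?_⟩
  · exact hB.eq_of_sup_eq (hsub F) (hsub G) (by simpa only [hsup] using h)
  · obtain ⟨F, hFB, hFsup⟩ := (hB x).exists
    refine ⟨F.subtype (· ∈ B), ?_⟩
    dsimp only
    rw [hsup, Finset.subtype_map, Finset.filter_true_of_mem fun _ hx => hFB hx, hFsup]

theorem card_eq_two_pow [Finite S] (hB : IsSemilatticeBasis B) :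
    Nat.card S = 2 ^ Nat.card B := by
  have := Fintype.ofFinite B
  rw [← Nat.card_eq_of_bijective _ hB.bijective_finset_sup, Nat.card_eq_fintype_card,
    Fintype.card_finset, Nat.card_eq_fintype_card]

end IsSemilatticeBasis

/-- A basis of a join-semilattice with bottom is unique and equals the set of nonzero
coprime elements; if moreover `S` is finite with `r` nonzero coprimes, then `S` has
exactly `2 ^ r` elements. -/
theorem basis_eq_coprimes_and_card {S : Type*} [SemilatticeSup S] [OrderBot S]
    (B : Set S) (hB : IsSemilatticeBasis B) :
    B = NonzeroCoprimes S ∧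
      (Finite S → Nat.card S = 2 ^ Nat.card (NonzeroCoprimes S)) :=
  ⟨hB.eq_nonzeroCoprimes, fun _ => hB.eq_nonzeroCoprimes ▸ hB.card_eq_two_pow⟩
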